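/- Let ℓ ≥ 1, let H = (V, ℰ) be a hypergraph, and let v ∈ V be a vertex whose twin class has at least ℓ elements. If H has a representative support with fewer than ℓ vertices, then H − v has a support in which fewer than ℓ vertices have degree greater than one. -/

import Mathlib

/-- A hypergraph: a finite vertex set `V ⊆ ℕ` together with a finite family of
hyperedges, each a subset of `V` of size at least 2. -/
structure FinHypergraph where
  V : Finset ℕ
  E : Finset (Finset ℕ)
  edge_sub : ∀ F ∈ E, F ⊆ V
  edge_card : ∀ F ∈ E, 2 ≤ F.card

namespace FinHypergraph

/-- `ℰ(v)`: the set of hyperedges incident with `v`. -/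
def edgesAt (H : FinHypergraph) (v : ℕ) : Finset (Finset ℕ) :=
  H.E.filter (fun F => v ∈ F)

/-- `w` covers `v` if `ℰ(v) ⊆ ℰ(w)`. -/
def Covers (H : FinHypergraph) (w v : ℕ) : Prop :=
  H.edgesAt v ⊆ H.edgesAt w

/-- `u` and `v` are twins if `ℰ(u) = ℰ(v)`. -/
def AreTwins (H : FinHypergraph) (u v : ℕ) : Prop :=
  H.edgesAt u = H.edgesAt v

/-- The twin class of `v`: all vertices with the same incident hyperedges as `v`. -/
def twinClass (H : FinHypergraph) (v : ℕ) : Finset ℕ :=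
  H.V.filter (fun u => H.edgesAt u = H.edgesAt v)

/-- `H − v`: delete vertex `v`, removing it from every hyperedge and discarding
   the resulting sets of size less than 2. -/
def delete (H : FinHypergraph) (v : ℕ) : FinHypergraph where
  V := H.V.erase v
  E := (H.E.image (fun F => F.erase v)).filter (fun F => 2 ≤ F.card)
  edge_sub := by
    intro F hF
    simp only [Finset.mem_filter, Finset.mem_image] at hF
    obtain ⟨⟨F₀, hF₀, rfl⟩, -⟩ := hF
    intro x hx
    exact Finset.mem_erase.mpr ⟨(Finset.mem_erase.mp hx).1,
      H.edge_sub F₀ hF₀ (Finset.mem_erase.mp hx).2⟩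
  edge_card := fun F hF => (Finset.mem_filter.mp hF).2

end FinHypergraph

/-- All edges of the graph `G` have both endpoints in `W`
    (i.e. `G` is a graph on the vertex set `W`). -/
def EdgesWithin (G : SimpleGraph ℕ) (W : Finset ℕ) : Prop :=
  ∀ a b, G.Adj a b → a ∈ W ∧ b ∈ W

/-- `G` is a support for `H`: a graph on the vertex set of `H` in which every
    hyperedge induces a connected subgraph. -/
def IsSupport (H : FinHypergraph) (G : SimpleGraph ℕ) : Prop :=
  EdgesWithin G H.V ∧ ∀ F ∈ H.E, ((G.induce (F : Set ℕ)).Connected)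

/-- `G` is a representative support for `H` with vertex set `W ⊆ H.V`:
    (i) every hyperedge `F` with `|F ∩ W| ≥ 2` induces (on `F ∩ W`) a connected
    subgraph of `G`, and (ii) every vertex outside `W` is covered by a vertex of `W`. -/
def IsRepSupport (H : FinHypergraph) (W : Finset ℕ) (G : SimpleGraph ℕ) : Prop :=
  W ⊆ H.V ∧ EdgesWithin G W ∧
    (∀ F ∈ H.E, 2 ≤ (F ∩ W).card → ((G.induce ((F ∩ W : Finset ℕ) : Set ℕ)).Connected)) ∧
    (∀ v ∈ H.V \ W, ∃ w ∈ W, H.Covers w v)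

/-!
Choose a representative support `G` on `W` with `|W| < ℓ`. Since the twin class of `v` has at
least `ℓ` elements, some twin `u` of `v` lies outside `W`, and swapping `u` with `v` (a
permutation fixing every hyperedge setwise) yields a representative support avoiding `v`.
Every vertex of `H − v` outside `W` is covered by a vertex of `W`, which lies in every hyperedge
containing it; attaching each such vertex to a coverer as a pendant vertex therefore makes every
hyperedge of `H − v` connected, and only vertices of `W` can get degree greater than one.
-/

namespace SimpleGraph

variable {V : Type*} {G : SimpleGraph V}

lemma Connected.induce_map {W : Type*} (f : V ↪ W) {s : Set V} (h : (G.induce s).Connected) :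
    ((G.map f).induce (f '' s)).Connected :=
  h.map (induceHom (Embedding.map f G).toHom (Set.mapsTo_image f s))
    (Set.surjective_mapsTo_image_restrict f s)

lemma induce_connected_of_forall_exists_adj {s t : Set V} (hts : t ⊆ s)
    (ht : (G.induce t).Connected) (hadj : ∀ x ∈ s, x ∉ t → ∃ y ∈ t, G.Adj x y) :
    (G.induce s).Connected := by
  obtain ⟨⟨u, hu⟩⟩ := ht.nonempty
  refine G.induce_connected_of_patches u (hts hu) fun {x} hx => ?_
  by_cases hxt : x ∈ t
  · exact ⟨t, hts, hu, hxt, ht.preconnected _ _⟩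
  obtain ⟨y, hy, hxy⟩ := hadj x hx hxt
  have hconn : (G.induce ({x} ∪ t)).Connected :=
    connected_induce_union (by simp) ht.preconnected rfl hy hxy
  exact ⟨{x} ∪ t, Set.union_subset (Set.singleton_subset_iff.mpr hx) hts, Or.inr hu, Or.inl rfl,
    hconn.preconnected _ _⟩

def attachPendants (G : SimpleGraph V) (U : Set V) (f : V → V) : SimpleGraph V :=
  G ⊔ fromRel (fun x y => x ∈ U ∧ y = f x)

end SimpleGraph

open SimpleGraph

namespace FinHypergraph

variable {H : FinHypergraph}

lemma mem_iff_mem_of_edgesAt_eq {x y : ℕ} (h : H.edgesAt x = H.edgesAt y) {F : Finset ℕ}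
    (hF : F ∈ H.E) : x ∈ F ↔ y ∈ F := by
  simpa [edgesAt, hF] using Finset.ext_iff.mp h F

lemma Covers.mem_of_mem {w x : ℕ} (h : H.Covers w x) {F : Finset ℕ} (hF : F ∈ H.E)
    (hx : x ∈ F) : w ∈ F :=
  (Finset.mem_filter.mp (h (Finset.mem_filter.mpr ⟨hF, hx⟩))).2

end FinHypergraph

variable {G : SimpleGraph ℕ} {W : Finset ℕ}

lemma EdgesWithin.attachPendants {U : Set ℕ} {f : ℕ → ℕ} {S : Finset ℕ}
    (hG : EdgesWithin G W) (hWS : W ⊆ S) (hUS : U ⊆ S) (hf : Set.MapsTo f U W) :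
    EdgesWithin (G.attachPendants U f) S := by
  rintro a b (hab | ⟨-, ⟨haU, rfl⟩ | ⟨hbU, rfl⟩⟩)
  · exact ⟨hWS (hG a b hab).1, hWS (hG a b hab).2⟩
  · exact ⟨hUS haU, hWS (hf haU)⟩
  · exact ⟨hWS (hf hbU), hUS hbU⟩

lemma EdgesWithin.eq_of_attachPendants_adj {U : Set ℕ} {f : ℕ → ℕ} (hG : EdgesWithin G W)
    (hf : Set.MapsTo f U W) {x y : ℕ} (hx : x ∉ W) (hxy : (G.attachPendants U f).Adj x y) :
    y = f x := by
  rcases hxy with hxy | ⟨-, ⟨-, rfl⟩ | ⟨hyU, rfl⟩⟩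
  · exact absurd (hG x y hxy).1 hx
  · rfl
  · exact absurd (hf hyU) hx

namespace IsRepSupport

variable {H : FinHypergraph}

lemma induce_inter_connected (h : IsRepSupport H W G) {F : Finset ℕ} (hF : F ∈ H.E)
    (hne : (F ∩ W).Nonempty) : (G.induce ↑(F ∩ W)).Connected := by
  rcases Nat.lt_or_ge (F ∩ W).card 2 with hlt | hge
  · have hone : (F ∩ W).card = 1 := by have := hne.card_pos; omega
    obtain ⟨y, hy⟩ := Finset.card_eq_one.mp hone
    rw [hy, Finset.coe_singleton, induce_singleton_eq_top]
    exact connected_top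
  · exact h.2.2.1 F hF hge

lemma map_perm (h : IsRepSupport H W G) (σ : Equiv.Perm ℕ)
    (hV : ∀ x, σ x ∈ H.V ↔ x ∈ H.V) (hE : ∀ x, H.edgesAt (σ x) = H.edgesAt x) :
    IsRepSupport H (W.map σ.toEmbedding) (G.map σ.toEmbedding) := by
  obtain ⟨hWV, hGW, hconn, hcov⟩ := h
  have hE_symm (x : ℕ) : H.edgesAt (σ.symm x) = H.edgesAt x := by
    simpa using (hE (σ.symm x)).symm
  have hFW : ∀ F ∈ H.E, F ∩ W.map σ.toEmbedding = (F ∩ W).map σ.toEmbedding := by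
    intro F hF
    ext x
    simp only [Finset.mem_inter, Finset.mem_map_equiv,
      FinHypergraph.mem_iff_mem_of_edgesAt_eq (hE_symm x) hF]
  refine ⟨?_, ?_, ?_, ?_⟩
  · intro x hx
    simpa using (hV (σ.symm x)).mpr (hWV (Finset.mem_map_equiv.mp hx))
  · rintro _ _ ⟨-, a, b, hab, rfl, rfl⟩
    exact ⟨Finset.mem_map_of_mem _ (hGW a b hab).1, Finset.mem_map_of_mem _ (hGW a b hab).2⟩
  · intro F hF hcard
    rw [hFW F hF, Finset.card_map] at hcard
    rw [hFW F hF, Finset.coe_map]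
    exact (hconn F hF hcard).induce_map _
  · intro x hx
    obtain ⟨hxV, hxW⟩ := Finset.mem_sdiff.mp hx
    have hxV' : σ.symm x ∈ H.V := (hV _).mp (by simpa using hxV)
    obtain ⟨w, hw, hcovw⟩ :=
      hcov (σ.symm x) (Finset.mem_sdiff.mpr ⟨hxV', Finset.mem_map_equiv.not.mp hxW⟩)
    refine ⟨σ w, Finset.mem_map_of_mem _ hw, ?_⟩
    rwa [FinHypergraph.Covers, hE, ← hE_symm]

lemma exists_notMem_of_card_lt_card_twinClass (h : IsRepSupport H W G) {v : ℕ}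
    (hcard : W.card < (H.twinClass v).card) :
    ∃ (W' : Finset ℕ) (G' : SimpleGraph ℕ),
      IsRepSupport H W' G' ∧ W'.card = W.card ∧ v ∉ W' := by
  by_cases hvW : v ∉ W
  · exact ⟨W, G, h, rfl, hvW⟩
  rw [not_not] at hvW
  obtain ⟨u, hu, huW⟩ := Finset.exists_mem_notMem_of_card_lt_card hcard
  obtain ⟨huV, huv⟩ := Finset.mem_filter.mp hu
  have hV (x : ℕ) : Equiv.swap u v x ∈ H.V ↔ x ∈ H.V :=
    Iff.of_eq (Equiv.apply_swap_eq_self (v := (· ∈ H.V)) (by simp [huV, h.1 hvW]) x)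
  refine ⟨_, _, h.map_perm _ hV (Equiv.apply_swap_eq_self huv), Finset.card_map _, ?_⟩
  rwa [Finset.mem_map_equiv, Equiv.symm_swap, Equiv.swap_apply_right]

lemma induce_erase_attachPendants_connected (h : IsRepSupport H W G) {v : ℕ} (hvW : v ∉ W)
    {f : ℕ → ℕ} (hf : ∀ x ∈ H.V \ W, f x ∈ W ∧ H.Covers (f x) x) {F : Finset ℕ}
    (hF : F ∈ H.E) (hcard : 2 ≤ (F.erase v).card) :
    ((G.attachPendants ↑(H.V.erase v \ W) f).induce ↑(F.erase v)).Connected := by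
  have hxV {x : ℕ} (hx : x ∈ F.erase v) : x ∈ H.V :=
    H.edge_sub F hF (Finset.mem_of_mem_erase hx)
  have hfF {x : ℕ} (hx : x ∈ F.erase v) (hxW : x ∉ W) : f x ∈ F ∩ W :=
    have hx' := Finset.mem_sdiff.mpr ⟨hxV hx, hxW⟩
    Finset.mem_inter.mpr ⟨(hf x hx').2.mem_of_mem hF (Finset.mem_of_mem_erase hx), (hf x hx').1⟩
  have hne : (F ∩ W).Nonempty := by
    obtain ⟨x, hx⟩ := Finset.card_pos.mp (by omega : 0 < (F.erase v).card)
    by_cases hxW : x ∈ W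
    · exact ⟨x, Finset.mem_inter.mpr ⟨Finset.mem_of_mem_erase hx, hxW⟩⟩
    · exact ⟨f x, hfF hx hxW⟩
  refine induce_connected_of_forall_exists_adj (t := ↑(F ∩ W)) (fun x hx => ?_)
    ((h.induce_inter_connected hF hne).mono (comap_monotone _ le_sup_left)) fun x hx hxt => ?_
  · obtain ⟨hxF, hxW⟩ := Finset.mem_inter.mp hx
    exact Finset.mem_erase.mpr ⟨ne_of_mem_of_not_mem hxW hvW, hxF⟩
  have hxW : x ∉ W := fun hxW => hxt (Finset.mem_inter.mpr ⟨Finset.mem_of_mem_erase hx, hxW⟩)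
  have hxU : x ∈ H.V.erase v \ W :=
    Finset.mem_sdiff.mpr ⟨Finset.mem_erase.mpr ⟨Finset.ne_of_mem_erase hx, hxV hx⟩, hxW⟩
  have hfx := hfF hx hxW
  exact ⟨f x, hfx, Or.inr ⟨(ne_of_mem_of_not_mem (Finset.mem_inter.mp hfx).2 hxW).symm,
    Or.inl ⟨hxU, rfl⟩⟩⟩

lemma exists_support_delete (h : IsRepSupport H W G) {v : ℕ} (hvW : v ∉ W) :
    ∃ G' : SimpleGraph ℕ, IsSupport (H.delete v) G' ∧
      {x | ∃ a b, a ≠ b ∧ G'.Adj x a ∧ G'.Adj x b} ⊆ W := by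
  choose! f hf using h.2.2.2
  have hfU : Set.MapsTo f ↑(H.V.erase v \ W) W := fun x hx =>
    (hf x (Finset.sdiff_subset_sdiff (Finset.erase_subset v H.V) subset_rfl hx)).1
  have hWS : W ⊆ H.V.erase v := fun x hx =>
    Finset.mem_erase.mpr ⟨ne_of_mem_of_not_mem hx hvW, h.1 hx⟩
  refine ⟨_, ⟨h.2.1.attachPendants hWS Finset.sdiff_subset hfU, fun F' hF' => ?_⟩, ?_⟩
  · simp only [FinHypergraph.delete, Finset.mem_filter, Finset.mem_image] at hF'
    obtain ⟨⟨F, hF, rfl⟩, hcard⟩ := hF'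
    exact h.induce_erase_attachPendants_connected hvW hf hF hcard
  · rintro x ⟨a, b, hab, hxa, hxb⟩
    by_contra hxW
    exact hab ((h.2.1.eq_of_attachPendants_adj hfU hxW hxa).trans
      (h.2.1.eq_of_attachPendants_adj hfU hxW hxb).symm)

end IsRepSupport

theorem delete_twin_support_few_high_degree_general
    (ℓ : ℕ)
    (H : FinHypergraph) (v : ℕ)
    (htc : ℓ ≤ (H.twinClass v).card)
    (hrep : ∃ (W : Finset ℕ) (G : SimpleGraph ℕ), IsRepSupport H W G ∧ W.card < ℓ) :
    ∃ G' : SimpleGraph ℕ, IsSupport (H.delete v) G' ∧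
      ((((H.delete v).V : Set ℕ) ∩
        {x : ℕ | ∃ a b : ℕ, a ≠ b ∧ G'.Adj x a ∧ G'.Adj x b}).ncard < ℓ) := by
  obtain ⟨W₀, G₀, hrep₀, hcard₀⟩ := hrep
  obtain ⟨W, G, hrep, hcard, hvW⟩ :=
    hrep₀.exists_notMem_of_card_lt_card_twinClass (hcard₀.trans_le htc)
  obtain ⟨G', hsupp, hdeg⟩ := hrep.exists_support_delete hvW
  refine ⟨G', hsupp, ?_⟩
  calc _ ≤ (W : Set ℕ).ncard :=
        Set.ncard_le_ncard (Set.inter_subset_right.trans hdeg) W.finite_toSet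
    _ = W.card := Set.ncard_coe_finset W
    _ < ℓ := hcard ▸ hcard₀

/-- If the twin class of `v` has at least `ℓ ≥ 1` elements and `H`
has a representative support with fewer than `ℓ` vertices, then `H − v` has a
support in which fewer than `ℓ` vertices have degree greater than one. -/
theorem delete_twin_support_few_high_degree
    (ℓ : ℕ) (hℓ : 1 ≤ ℓ)
    (H : FinHypergraph) (v : ℕ) (hv : v ∈ H.V)
    (htc : ℓ ≤ (H.twinClass v).card)
    (hrep : ∃ (W : Finset ℕ) (G : SimpleGraph ℕ), IsRepSupport H W G ∧ W.card < ℓ) :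
    ∃ G' : SimpleGraph ℕ, IsSupport (H.delete v) G' ∧
      ((((H.delete v).V : Set ℕ) ∩
        {x : ℕ | ∃ a b : ℕ, a ≠ b ∧ G'.Adj x a ∧ G'.Adj x b}).ncard < ℓ) :=
  delete_twin_support_few_high_degree_general ℓ H v htc hrep
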